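/- arXiv:2006.00191 — 3 statements merged into one kernel-verified Lean document; each statement's English description precedes it below -/
import Mathlib

section
/- Let w₁, w₂ be nonzero complex numbers with |w₁| ≠ |w₂|. Let the legitimate receiver use a (k¹_R, k¹_I)-point per-component receiver with arbitrary strictly increasing thresholds c_{R,1} < ⋯ < c_{R,k¹_R−1} and c_{I,1} < ⋯ < c_{I,k¹_I−1} (k¹_R, k¹_I ≥ 2), and let the eavesdropper use a (k²_R, k²_I)-point per-component receiver with arbitrary strictly increasing thresholds q_{R,1} < ⋯ < q_{R,k²_R−1} and q_{I,1} < ⋯ < q_{I,k²_I−1} (k²_R, k²_I ≥ 2). Then there exist φ ∈ (0,1) and x₁, x₂ ∈ ℂ such that I₁ − I₂ > 0, where I₁ is the binary-input mutual information (input x₁ with probability φ, x₂ with probability 1−φ) of the legitimate receiver's channel with gain w₁ and I₂ is that of the eavesdropper's channel with gain w₂. (Corollary 1: a positive secrecy rate is achievable for the Gaussian wiretap channel with arbitrary finite-resolution ADCs at both receivers whenever |w₁| ≠ |w₂|.) -/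
/-!
Multiplying both inputs by `w₁⁻¹` normalises the legitimate gain to `1` and turns the
eavesdropper's gain into `ρ = w₂ / w₁` with `‖ρ‖ ≠ 1`. At `φ = 1/2` each mutual information is
the Jensen–Shannon divergence of the two output distributions, which is `0` when both
concentrate on one cell and `log 2` when they are disjoint.

If `ρ` is real or purely imaginary, real inputs `t` leave one quantizer of each receiver
active, and they see `t` and `r t` with `|r| ≠ 1`. The Gaussian tail estimates
`(2π)^{-1/2} e^{-(s+1)²/2} ≤ Q(s) ≤ e^{-s²/2}` (for `s ≥ 0`) then decide. For `|r| < 1` the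
antipodal inputs `±T` bring the legitimate divergence to `log 2` at rate about `T² e^{-T²/2}`,
the eavesdropper's only at rate about `e^{-r²T²/2}`. For `|r| > 1` the inputs `T + 2` and `T`
make the eavesdropper's divergence vanish at rate about `e^{-r²T²/2}`, while the lowest
legitimate cell keeps it of order `e^{-T²/2}`.

Otherwise the inputs `2 + iT` and `iT` differ, for the legitimate receiver, only in their
fixed real parts, whereas for large `T` both fall into the same corner cell of the
eavesdropper's two quantizers.
-/

open MeasureTheory Real Filter

/-- The standard Gaussian tail function `Q(x) = ∫_x^∞ (2π)^{-1/2} e^{-u²/2} du`. -/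
noncomputable def gaussQ (x : ℝ) : ℝ :=
  ∫ u in Set.Ioi x, (Real.sqrt (2 * Real.pi))⁻¹ * Real.exp (-u ^ 2 / 2)

/-- `η(t) = -t log t` (with `η(0) = 0`, automatic since `Real.log 0 = 0`). -/
noncomputable def eta (t : ℝ) : ℝ := -t * Real.log t

/-- The binary entropy function `h(p) = -p log p - (1-p) log (1-p)`. -/
noncomputable def binEnt (p : ℝ) : ℝ := eta p + eta (1 - p)

/-- Boundary-extended Gaussian tail for a `k`-point ADC with thresholds `q`. -/
noncomputable def Qb (k : ℕ) (q : ℕ → ℝ) (t : ℝ) (l : ℕ) : ℝ :=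
  if l = 0 then 1 else if l = k then 0 else gaussQ (q l - t)

/-- `p_l(t) = Q(q_{l-1} - t) - Q(q_l - t)` for the `k`-point ADC. -/
noncomputable def adcP (k : ℕ) (q : ℕ → ℝ) (t : ℝ) (l : ℕ) : ℝ :=
  Qb k q t (l - 1) - Qb k q t l

/-- Sign value of a Boolean: `true ↦ +1`, `false ↦ -1`. -/
noncomputable def sgnb (b : Bool) : ℝ := if b then 1 else -1

/-- Transition probability of the complex Gaussian channel with gain `w` followed by
per-component one-bit ADCs: `P((s_R,s_I)|x) = Q(-s_R·Re(wx))·Q(-s_I·Im(wx))`. -/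
noncomputable def p1bitC (w x : ℂ) (s : Bool × Bool) : ℝ :=
  gaussQ (-(sgnb s.1) * (w * x).re) * gaussQ (-(sgnb s.2) * (w * x).im)

/-- Binary-input mutual information of the complex Gaussian channel with gain `w`
followed by per-component one-bit ADCs, input `x₁` w.p. `φ` and `x₂` w.p. `1-φ`. -/
noncomputable def miOneBitC (w : ℂ) (φ : ℝ) (x₁ x₂ : ℂ) : ℝ :=
  ∑ s : Bool × Bool,
    (eta (φ * p1bitC w x₁ s + (1 - φ) * p1bitC w x₂ s)
      - φ * eta (p1bitC w x₁ s) - (1 - φ) * eta (p1bitC w x₂ s))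

/-- Transition probability of the complex Gaussian channel with gain `w` followed by a
`(k_R, k_I)`-point per-component receiver with thresholds `qR`, `qI`:
`P((i,l)|x) = p_{R,i}(Re(wx)) · p_{I,l}(Im(wx))`. -/
noncomputable def pADCC (w : ℂ) (kR kI : ℕ) (qR qI : ℕ → ℝ) (x : ℂ) (y : ℕ × ℕ) : ℝ :=
  adcP kR qR ((w * x).re) y.1 * adcP kI qI ((w * x).im) y.2

/-- Binary-input mutual information of the complex Gaussian channel with gain `w`
followed by a `(k_R, k_I)`-point per-component receiver, input `x₁` w.p. `φ` and
`x₂` w.p. `1-φ`. -/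
noncomputable def miADCC (w : ℂ) (kR kI : ℕ) (qR qI : ℕ → ℝ) (φ : ℝ) (x₁ x₂ : ℂ) : ℝ :=
  ∑ y ∈ Finset.Icc 1 kR ×ˢ Finset.Icc 1 kI,
    (eta (φ * pADCC w kR kI qR qI x₁ y + (1 - φ) * pADCC w kR kI qR qI x₂ y)
      - φ * eta (pADCC w kR kI qR qI x₁ y) - (1 - φ) * eta (pADCC w kR kI qR qI x₂ y))

open ProbabilityTheory
open scoped Topology

lemma gaussQ_eq_measureReal (x : ℝ) : gaussQ x = (gaussianReal 0 1).real (Set.Ioi x) := by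
  rw [measureReal_def, gaussianReal_apply_eq_integral _ one_ne_zero,
    ENNReal.toReal_ofReal (setIntegral_nonneg measurableSet_Ioi fun u _ ↦
      gaussianPDFReal_nonneg _ _ u)]
  simp [gaussQ, gaussianPDFReal]

lemma gaussQ_eq_one_sub_cdf (x : ℝ) : gaussQ x = 1 - cdf (gaussianReal 0 1) x := by
  rw [gaussQ_eq_measureReal, cdf_eq_real, ← Set.compl_Iic, measureReal_compl measurableSet_Iic,
    probReal_univ]

lemma gaussQ_neg (x : ℝ) : gaussQ (-x) = 1 - gaussQ x := by
  have h : (gaussianReal 0 1).real (Set.Ioi (-x)) = (gaussianReal 0 1).real (Set.Iio x) := by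
    conv_lhs => rw [← neg_zero, ← gaussianReal_map_neg]
    rw [map_measureReal_apply measurable_neg measurableSet_Ioi]
    congr 1
    ext u; simp
  have := nullSingletonClass_gaussianReal (μ := 0) one_ne_zero
  rw [gaussQ_eq_measureReal, h, measureReal_congr Iio_ae_eq_Iic, ← cdf_eq_real,
    gaussQ_eq_one_sub_cdf]
  ring

lemma gaussQ_antitone : Antitone gaussQ := fun x y hxy ↦ by
  simp only [gaussQ_eq_one_sub_cdf]
  linarith [monotone_cdf (gaussianReal 0 1) hxy]

lemma gaussQ_nonneg (x : ℝ) : 0 ≤ gaussQ x := by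
  rw [gaussQ_eq_one_sub_cdf]; linarith [cdf_le_one (gaussianReal 0 1) x]

lemma tendsto_gaussQ_atBot : Tendsto gaussQ atBot (𝓝 1) := by
  simpa [funext gaussQ_eq_one_sub_cdf] using (tendsto_cdf_atBot (gaussianReal 0 1)).const_sub 1

lemma gaussQ_sub_gaussQ_eq {x y : ℝ} (hxy : x ≤ y) :
    gaussQ x - gaussQ y = ∫ u in Set.Ioc x y, gaussianPDFReal 0 1 u := by
  have h := congrArg ENNReal.toReal (gaussianReal_apply_eq_integral 0 one_ne_zero (Set.Ioc x y))
  rw [← measure_cdf (gaussianReal 0 1), StieltjesFunction.measure_Ioc,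
    ENNReal.toReal_ofReal (by linarith [monotone_cdf (gaussianReal 0 1) hxy]),
    ENNReal.toReal_ofReal (setIntegral_nonneg measurableSet_Ioc fun u _ ↦
      gaussianPDFReal_nonneg _ _ u)] at h
  rw [gaussQ_eq_one_sub_cdf, gaussQ_eq_one_sub_cdf, ← h]
  ring

lemma mul_exp_le_gaussQ_sub_gaussQ {x y c : ℝ} (hxy : x ≤ y) (hc : ∀ u ∈ Set.Ioc x y, |u| ≤ c) :
    (y - x) * ((√(2 * π))⁻¹ * exp (-c ^ 2 / 2)) ≤ gaussQ x - gaussQ y := by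
  rw [gaussQ_sub_gaussQ_eq hxy]
  have hconst : ∫ _ in Set.Ioc x y, (√(2 * π))⁻¹ * exp (-c ^ 2 / 2)
      = (y - x) * ((√(2 * π))⁻¹ * exp (-c ^ 2 / 2)) := by
    rw [setIntegral_const, measureReal_def, Real.volume_Ioc, smul_eq_mul,
      ENNReal.toReal_ofReal (by linarith)]
  rw [← hconst]
  refine setIntegral_mono_on (integrableOn_const measure_Ioc_lt_top.ne)
    (integrable_gaussianPDFReal 0 1).integrableOn measurableSet_Ioc fun u hu ↦ ?_
  have hu2 : u ^ 2 ≤ c ^ 2 := sq_le_sq' (neg_le_of_abs_le (hc u hu)) (le_of_abs_le (hc u hu))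
  simp only [gaussianPDFReal, NNReal.coe_one, mul_one, sub_zero]
  gcongr

lemma gaussQ_strictAnti : StrictAnti gaussQ := fun x y hxy ↦ by
  have h := mul_exp_le_gaussQ_sub_gaussQ hxy.le (c := |x| + |y|) fun u hu ↦ abs_le.2
    ⟨by linarith [neg_abs_le x, abs_nonneg y, hu.1],
      by linarith [le_abs_self y, abs_nonneg x, hu.2]⟩
  have : 0 < (y - x) * ((√(2 * π))⁻¹ * exp (-(|x| + |y|) ^ 2 / 2)) := by
    have : 0 < y - x := by linarith
    positivity
  linarith

lemma gaussQ_pos (x : ℝ) : 0 < gaussQ x :=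
  (gaussQ_nonneg (x + 1)).trans_lt (gaussQ_strictAnti (by linarith))

lemma mul_exp_le_gaussQ {s : ℝ} (hs : 0 ≤ s) :
    (√(2 * π))⁻¹ * exp (-(s + 1) ^ 2 / 2) ≤ gaussQ s := by
  have h := mul_exp_le_gaussQ_sub_gaussQ (le_add_of_nonneg_right zero_le_one) (c := s + 1)
    fun u hu ↦ abs_le.2 ⟨by linarith [hu.1], hu.2⟩
  rw [add_sub_cancel_left, one_mul] at h
  linarith [gaussQ_nonneg (s + 1)]

lemma gaussQ_le_exp {s : ℝ} (hs : 0 ≤ s) : gaussQ s ≤ exp (-s ^ 2 / 2) := by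
  have h := measure_ge_le_exp_mul_mgf (X := id) (μ := gaussianReal 0 1) s hs
    (integrable_exp_mul_gaussianReal s)
  rw [mgf_id_gaussianReal, ← exp_add] at h
  calc gaussQ s ≤ (gaussianReal 0 1).real {ω | s ≤ id ω} := by
        rw [gaussQ_eq_measureReal]
        exact measureReal_mono fun u (hu : s < u) ↦ hu.le
    _ ≤ _ := h
    _ = exp (-s ^ 2 / 2) := by push_cast; ring_nf

lemma eta_eq_negMulLog : eta = Real.negMulLog := rfl

lemma sub_le_mul_log {x y : ℝ} (hx : 0 < x) (hy : 0 < y) : x - y ≤ x * log (x / y) := by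
  have h := Real.one_sub_inv_le_log_of_pos (div_pos hx hy)
  rw [inv_div] at h
  have : x * (1 - y / x) = x - y := by field_simp
  nlinarith

lemma sub_lt_mul_log {x y : ℝ} (hx : 0 < x) (hy : 0 < y) (hxy : x ≠ y) :
    x - y < x * log (x / y) := by
  have h := Real.log_lt_sub_one_of_pos (div_pos hy hx) (div_ne_one_of_ne hxy.symm)
  rw [← inv_div, Real.log_inv, inv_div] at h
  have : x * (y / x - 1) = y - x := by field_simp
  nlinarith

lemma mul_div_add_le_mul_log {a b : ℝ} (ha : 0 < a) (hb : 0 < b) :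
    a * b / (a + b) ≤ a * log ((a + b) / a) := by
  have h := Real.one_sub_inv_le_log_of_pos (by positivity : 0 < (a + b) / a)
  have : a * (1 - ((a + b) / a)⁻¹) = a * b / (a + b) := by field_simp; ring
  nlinarith

lemma eta_le_of_le {a ε : ℝ} (ha : 0 < a) (haε : a ≤ ε) (hε : ε ≤ 1) :
    eta a ≤ ε * (1 + log ε⁻¹) := by
  have hε0 : 0 < ε := ha.trans_le haε
  have hlog : 0 ≤ log ε⁻¹ := Real.log_nonneg (one_le_inv₀ hε0 |>.2 hε)
  have h1 := sub_le_mul_log ha hε0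
  have h2 : eta a = -(a * log (a / ε)) + a * log ε⁻¹ := by
    rw [eta, Real.log_div ha.ne' hε0.ne', Real.log_inv]; ring
  nlinarith

/-- The contribution of one output symbol to the mutual information `miADCC` at `φ = 1/2`. -/
noncomputable def jsTerm (a b : ℝ) : ℝ := eta ((a + b) / 2) - eta a / 2 - eta b / 2

section JsTerm

variable {a b : ℝ}

lemma jsTerm_comm (a b : ℝ) : jsTerm a b = jsTerm b a := by
  simp only [jsTerm, add_comm a b]; ring

lemma jsTerm_mul_right (a b c : ℝ) : jsTerm (a * c) (b * c) = c * jsTerm a b := by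
  simp only [jsTerm, eta_eq_negMulLog, show (a * c + b * c) / 2 = (a + b) / 2 * c by ring,
    Real.negMulLog_mul]
  ring

lemma jsTerm_eq (ha : 0 < a) (hb : 0 < b) :
    jsTerm a b = (a * log (a / ((a + b) / 2)) + b * log (b / ((a + b) / 2))) / 2 := by
  have hm : 0 < (a + b) / 2 := by positivity
  rw [jsTerm, eta, eta, eta, Real.log_div ha.ne' hm.ne', Real.log_div hb.ne' hm.ne']
  ring

lemma jsTerm_nonneg (ha : 0 < a) (hb : 0 < b) : 0 ≤ jsTerm a b := by
  have hm : 0 < (a + b) / 2 := by positivity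
  rw [jsTerm_eq ha hb]
  linarith [sub_le_mul_log ha hm, sub_le_mul_log hb hm]

lemma jsTerm_pos (ha : 0 < a) (hb : 0 < b) (hab : a ≠ b) : 0 < jsTerm a b := by
  have hm : 0 < (a + b) / 2 := by positivity
  rw [jsTerm_eq ha hb]
  have := sub_lt_mul_log ha hm (fun h ↦ hab (by linarith))
  linarith [sub_le_mul_log hb hm]

lemma sub_le_jsTerm (ha : 0 < a) (hb : 0 < b) : b / 12 - a / 4 ≤ jsTerm a b := by
  have hm : 0 < (a + b) / 2 := by positivity
  have hlog : log (b / ((a + b) / 2)) = log 2 + log (b / (a + b)) := by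
    rw [← Real.log_mul two_ne_zero (by positivity)]; congr 1; field_simp
  have h1 := sub_le_mul_log ha hm
  have h2 := sub_le_mul_log hb (by positivity : 0 < a + b)
  have h3 := Real.log_two_gt_d9
  rw [jsTerm_eq ha hb, hlog]
  nlinarith

lemma jsTerm_le_one_sub (ha : 0 < a) (ha1 : a ≤ 1) (hb : 0 < b) (hb1 : b ≤ 1) :
    jsTerm a b ≤ 1 - (a + b) / 2 := by
  have := Real.negMulLog_le_one_sub_self (x := (a + b) / 2) (by positivity)
  have := Real.negMulLog_nonneg ha.le ha1
  have := Real.negMulLog_nonneg hb.le hb1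
  rw [jsTerm, eta_eq_negMulLog]
  linarith

lemma mid_mul_log_two_sub_jsTerm_eq (ha : 0 < a) (hb : 0 < b) :
    (a + b) / 2 * log 2 - jsTerm a b = (a * log ((a + b) / a) + b * log ((a + b) / b)) / 2 := by
  have hab : 0 < a + b := by positivity
  rw [jsTerm_eq ha hb, Real.log_div ha.ne' (by positivity), Real.log_div hb.ne' (by positivity),
    Real.log_div hab.ne' ha.ne', Real.log_div hab.ne' hb.ne', Real.log_div hab.ne' two_ne_zero]
  ring

lemma mul_div_le_mid_mul_log_two_sub_jsTerm (ha : 0 < a) (hb : 0 < b) :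
    a * b / (a + b) ≤ (a + b) / 2 * log 2 - jsTerm a b := by
  have h1 := mul_div_add_le_mul_log ha hb
  have h2 := mul_div_add_le_mul_log hb ha
  rw [add_comm b a, mul_comm b a] at h2
  rw [mid_mul_log_two_sub_jsTerm_eq ha hb]
  linarith

lemma jsTerm_le_mid_mul_log_two (ha : 0 < a) (hb : 0 < b) : jsTerm a b ≤ (a + b) / 2 * log 2 :=
  sub_nonneg.1 ((div_nonneg (mul_pos ha hb).le (add_pos ha hb).le).trans
    (mul_div_le_mid_mul_log_two_sub_jsTerm ha hb))

lemma mid_mul_log_two_sub_jsTerm_le {ε : ℝ} (ha : 0 < a) (ha1 : a ≤ 1) (hb : 0 < b) (hb1 : b ≤ 1)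
    (hmin : min a b ≤ ε) (hε : ε ≤ 1) :
    (a + b) / 2 * log 2 - jsTerm a b ≤ ε * (2 + log ε⁻¹) := by
  wlog hab : a ≤ b generalizing a b
  · have h := this hb hb1 ha ha1 (by rwa [min_comm]) (le_of_not_ge hab)
    rwa [add_comm, jsTerm_comm] at h
  have haε : a ≤ ε := by rwa [min_eq_left hab] at hmin
  have hε0 : 0 < ε := ha.trans_le haε
  have hlogε : 0 ≤ log ε⁻¹ := Real.log_nonneg (one_le_inv₀ hε0 |>.2 hε)
  have h1 : log ((a + b) / a) ≤ log 2 - log a :=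
    (Real.log_le_log (by positivity) (by gcongr; linarith)).trans_eq
      (Real.log_div two_ne_zero ha.ne')
  have h2 : b * log ((a + b) / b) ≤ a := by
    have := Real.log_le_sub_one_of_pos (by positivity : 0 < (a + b) / b)
    have : b * ((a + b) / b - 1) = a := by field_simp; ring
    nlinarith
  have h3 := eta_le_of_le ha haε hε
  have h4 := Real.log_two_lt_d9
  rw [eta] at h3
  rw [mid_mul_log_two_sub_jsTerm_eq ha hb]
  nlinarith [mul_le_mul_of_nonneg_left h1 ha.le]

end JsTerm

/-- The Jensen–Shannon divergence of `a` and `b`: the mutual information of a uniform binary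
input whose two output distributions are `a` and `b`. -/
noncomputable def jsDiv {ι : Type*} (S : Finset ι) (a b : ι → ℝ) : ℝ :=
  ∑ y ∈ S, jsTerm (a y) (b y)

def IsPosDistrib {ι : Type*} (S : Finset ι) (a : ι → ℝ) : Prop :=
  (∀ y ∈ S, 0 < a y) ∧ ∑ y ∈ S, a y = 1

section JsDiv

variable {ι : Type*} {S : Finset ι} {a b : ι → ℝ}

lemma IsPosDistrib.le_one (ha : IsPosDistrib S a) {y : ι} (hy : y ∈ S) : a y ≤ 1 :=
  ha.2 ▸ Finset.single_le_sum (fun z hz ↦ (ha.1 z hz).le) hy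

lemma sum_add_div_two_eq_one (ha : IsPosDistrib S a) (hb : IsPosDistrib S b) :
    ∑ y ∈ S, (a y + b y) / 2 = 1 := by
  rw [← Finset.sum_div, Finset.sum_add_distrib, ha.2, hb.2]; norm_num

lemma jsTerm_le_jsDiv (ha : IsPosDistrib S a) (hb : IsPosDistrib S b) {y₀ : ι} (hy₀ : y₀ ∈ S) :
    jsTerm (a y₀) (b y₀) ≤ jsDiv S a b :=
  Finset.single_le_sum (f := fun y ↦ jsTerm (a y) (b y))
    (fun y hy ↦ jsTerm_nonneg (ha.1 y hy) (hb.1 y hy)) hy₀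

lemma jsDiv_nonneg (ha : IsPosDistrib S a) (hb : IsPosDistrib S b) : 0 ≤ jsDiv S a b :=
  Finset.sum_nonneg fun y hy ↦ jsTerm_nonneg (ha.1 y hy) (hb.1 y hy)

lemma jsDiv_pos (ha : IsPosDistrib S a) (hb : IsPosDistrib S b) {y₀ : ι} (hy₀ : y₀ ∈ S)
    (hne : a y₀ ≠ b y₀) : 0 < jsDiv S a b :=
  (jsTerm_pos (ha.1 y₀ hy₀) (hb.1 y₀ hy₀) hne).trans_le (jsTerm_le_jsDiv ha hb hy₀)

lemma jsDiv_le_of_mem (ha : IsPosDistrib S a) (hb : IsPosDistrib S b) {y₀ : ι} (hy₀ : y₀ ∈ S) :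
    jsDiv S a b ≤ (1 - a y₀) + (1 - b y₀) := by
  classical
  have hrest : ∑ y ∈ S.erase y₀, jsTerm (a y) (b y)
      ≤ ∑ y ∈ S.erase y₀, (a y + b y) / 2 * log 2 :=
    Finset.sum_le_sum fun y hy ↦ have hyS := Finset.mem_of_mem_erase hy
      jsTerm_le_mid_mul_log_two (ha.1 y hyS) (hb.1 y hyS)
  have hmass := Finset.add_sum_erase S (fun y ↦ (a y + b y) / 2) hy₀
  rw [sum_add_div_two_eq_one ha hb] at hmass
  have hy₀' := jsTerm_le_one_sub (ha.1 y₀ hy₀) (ha.le_one hy₀) (hb.1 y₀ hy₀) (hb.le_one hy₀)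
  have hrest_nonneg : 0 ≤ ∑ y ∈ S.erase y₀, (a y + b y) / 2 :=
    Finset.sum_nonneg fun y hy ↦ by
      have hyS := Finset.mem_of_mem_erase hy
      linarith [ha.1 y hyS, hb.1 y hyS]
  have hlog : log 2 ≤ 1 := by linarith [Real.log_two_lt_d9]
  rw [← Finset.sum_mul] at hrest
  rw [jsDiv, ← Finset.add_sum_erase S _ hy₀]
  nlinarith [mul_le_mul_of_nonneg_left hlog hrest_nonneg]

lemma tendsto_jsDiv_zero {α : Type*} {l : Filter α} {a b : α → ι → ℝ}
    (ha : ∀ T, IsPosDistrib S (a T)) (hb : ∀ T, IsPosDistrib S (b T)) {y₀ : ι} (hy₀ : y₀ ∈ S)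
    (ha₀ : Tendsto (fun T ↦ a T y₀) l (𝓝 1)) (hb₀ : Tendsto (fun T ↦ b T y₀) l (𝓝 1)) :
    Tendsto (fun T ↦ jsDiv S (a T) (b T)) l (𝓝 0) := by
  have h := (ha₀.const_sub 1).add (hb₀.const_sub 1)
  rw [sub_self, add_zero] at h
  exact squeeze_zero (fun T ↦ jsDiv_nonneg (ha T) (hb T))
    (fun T ↦ jsDiv_le_of_mem (ha T) (hb T) hy₀) h

lemma log_two_sub_jsDiv (ha : IsPosDistrib S a) (hb : IsPosDistrib S b) :
    log 2 - jsDiv S a b = ∑ y ∈ S, ((a y + b y) / 2 * log 2 - jsTerm (a y) (b y)) := by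
  rw [Finset.sum_sub_distrib, ← Finset.sum_mul, sum_add_div_two_eq_one ha hb, one_mul, jsDiv]

lemma half_le_log_two_sub_jsDiv (ha : IsPosDistrib S a) (hb : IsPosDistrib S b) {y₀ : ι}
    (hy₀ : y₀ ∈ S) (hab : a y₀ ≤ b y₀) : a y₀ / 2 ≤ log 2 - jsDiv S a b := by
  rw [log_two_sub_jsDiv ha hb]
  have hgap : ∀ y ∈ S, a y * b y / (a y + b y) ≤ (a y + b y) / 2 * log 2 - jsTerm (a y) (b y) :=
    fun y hy ↦ mul_div_le_mid_mul_log_two_sub_jsTerm (ha.1 y hy) (hb.1 y hy)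
  have hy₀' : a y₀ / 2 ≤ a y₀ * b y₀ / (a y₀ + b y₀) := by
    have := ha.1 y₀ hy₀
    rw [le_div_iff₀ (by linarith [hb.1 y₀ hy₀])]
    nlinarith
  exact hy₀'.trans ((hgap y₀ hy₀).trans (Finset.single_le_sum (fun y hy ↦ sub_nonneg.2
    (jsTerm_le_mid_mul_log_two (ha.1 y hy) (hb.1 y hy))) hy₀))

lemma log_two_sub_jsDiv_le (ha : IsPosDistrib S a) (hb : IsPosDistrib S b) {ε : ℝ} (hε : ε ≤ 1)
    (hmin : ∀ y ∈ S, min (a y) (b y) ≤ ε) :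
    log 2 - jsDiv S a b ≤ S.card * (ε * (2 + log ε⁻¹)) := by
  rw [log_two_sub_jsDiv ha hb, ← nsmul_eq_mul, ← Finset.sum_const]
  exact Finset.sum_le_sum fun y hy ↦ mid_mul_log_two_sub_jsTerm_le (ha.1 y hy) (ha.le_one hy)
    (hb.1 y hy) (hb.le_one hy) (hmin y hy) hε

end JsDiv

def StrictThresholds (k : ℕ) (q : ℕ → ℝ) : Prop :=
  ∀ l : ℕ, 1 ≤ l → l + 1 ≤ k - 1 → q l < q (l + 1)

section Adc

variable {k : ℕ} {q : ℕ → ℝ} {t : ℝ}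

lemma exists_abs_le_thresholds (k : ℕ) (q : ℕ → ℝ) :
    ∃ M, 0 ≤ M ∧ ∀ l ∈ Finset.Icc 1 (k - 1), |q l| ≤ M :=
  ⟨∑ l ∈ Finset.Icc 1 (k - 1), |q l|, Finset.sum_nonneg fun _ _ ↦ abs_nonneg _,
    fun _ hl ↦ Finset.single_le_sum (f := fun l ↦ |q l|) (fun _ _ ↦ abs_nonneg _) hl⟩

lemma sum_adcP (hk : k ≠ 0) : ∑ l ∈ Finset.Icc 1 k, adcP k q t l = 1 := by
  rw [← Finset.Ico_add_one_right_eq_Icc, Finset.sum_Ico_eq_sum_range, Nat.add_sub_cancel]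
  simp only [adcP, add_comm 1, Nat.add_sub_cancel]
  rw [Finset.sum_range_sub' (Qb k q t)]
  simp [Qb, hk]

lemma adcP_one (hk : 2 ≤ k) : adcP k q t 1 = gaussQ (t - q 1) := by
  rw [adcP, Nat.sub_self, Qb, Qb, if_pos rfl, if_neg one_ne_zero, if_neg (by omega),
    show q 1 - t = -(t - q 1) by ring, gaussQ_neg, sub_sub_cancel]

lemma adcP_self (hk : 2 ≤ k) : adcP k q t k = gaussQ (q (k - 1) - t) := by
  rw [adcP, Qb, Qb, if_neg (by omega), if_neg (by omega), if_neg (by omega), if_pos rfl, sub_zero]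

lemma adcP_pos (hk : 2 ≤ k) (hq : StrictThresholds k q) {l : ℕ} (hl : l ∈ Finset.Icc 1 k) :
    0 < adcP k q t l := by
  obtain ⟨hl1, hlk⟩ := Finset.mem_Icc.1 hl
  rcases hl1.eq_or_lt with rfl | hl1
  · rw [adcP_one hk]; exact gaussQ_pos _
  rcases hlk.eq_or_lt with rfl | hlk
  · rw [adcP_self hk]; exact gaussQ_pos _
  have hql : q (l - 1) < q l := by
    simpa [Nat.sub_add_cancel hl1.le] using hq (l - 1) (by omega) (by omega)
  rw [adcP, Qb, Qb, if_neg (by omega), if_neg (by omega), if_neg (by omega), if_neg (by omega),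
    sub_pos]
  exact gaussQ_strictAnti (by linarith)

lemma isPosDistrib_adcP (hk : 2 ≤ k) (hq : StrictThresholds k q) (t : ℝ) :
    IsPosDistrib (Finset.Icc 1 k) (adcP k q t) :=
  ⟨fun _ hl ↦ adcP_pos hk hq hl, sum_adcP (by omega)⟩

variable {M : ℝ}

lemma min_adcP_adcP_neg_le (hM : ∀ l ∈ Finset.Icc 1 (k - 1), |q l| ≤ M) (hk : 2 ≤ k) {l : ℕ}
    (hl : l ∈ Finset.Icc 1 k) :
    min (adcP k q t l) (adcP k q (-t) l) ≤ gaussQ (t - M) := by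
  obtain ⟨hl1, hlk⟩ := Finset.mem_Icc.1 hl
  rcases hl1.eq_or_lt with rfl | hl1
  · refine (min_le_left _ _).trans ?_
    rw [adcP_one hk]
    exact gaussQ_antitone (by linarith [(abs_le.1 (hM 1 (by simp; omega))).2])
  · refine (min_le_right _ _).trans ?_
    have hQb : 0 ≤ Qb k q (-t) l := by
      unfold Qb; split_ifs <;> simp [gaussQ_nonneg]
    have hq := (abs_le.1 (hM (l - 1) (by simp; omega))).1
    rw [adcP, Qb, if_neg (by omega), if_neg (by omega)]
    linarith [gaussQ_antitone (show t - M ≤ q (l - 1) - -t by linarith)]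

lemma exists_gaussQ_le_adcP_le_adcP_neg (hM : ∀ l ∈ Finset.Icc 1 (k - 1), |q l| ≤ M)
    (hk : 2 ≤ k) (t : ℝ) :
    ∃ l ∈ Finset.Icc 1 k, gaussQ (|t| + M) ≤ adcP k q t l ∧ adcP k q t l ≤ adcP k q (-t) l := by
  rcases le_or_gt 0 t with ht | ht
  · have := abs_le.1 (hM 1 (by simp; omega))
    refine ⟨1, by simp; omega, ?_⟩
    rw [adcP_one hk, adcP_one hk, abs_of_nonneg ht]
    exact ⟨gaussQ_antitone (by linarith), gaussQ_antitone (by linarith)⟩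
  · have := abs_le.1 (hM (k - 1) (by simp; omega))
    refine ⟨k, by simp; omega, ?_⟩
    rw [adcP_self hk, adcP_self hk, abs_of_neg ht]
    exact ⟨gaussQ_antitone (by linarith), gaussQ_antitone (by linarith)⟩

lemma exists_one_sub_adcP_le (hM : ∀ l ∈ Finset.Icc 1 (k - 1), |q l| ≤ M) (hk : 2 ≤ k) (r : ℝ) :
    ∃ l ∈ Finset.Icc 1 k, ∀ t, 1 - adcP k q (r * t) l ≤ gaussQ (|r| * t - M) := by
  rcases le_or_gt 0 r with hr | hr
  · have := abs_le.1 (hM (k - 1) (by simp; omega))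
    refine ⟨k, by simp; omega, fun t ↦ ?_⟩
    rw [adcP_self hk, show q (k - 1) - r * t = -(r * t - q (k - 1)) by ring, gaussQ_neg,
      sub_sub_cancel, abs_of_nonneg hr]
    exact gaussQ_antitone (by linarith)
  · have := abs_le.1 (hM 1 (by simp; omega))
    refine ⟨1, by simp; omega, fun t ↦ ?_⟩
    rw [adcP_one hk, show r * t - q 1 = -(q 1 - r * t) by ring, gaussQ_neg, sub_sub_cancel,
      abs_of_neg hr]
    exact gaussQ_antitone (by linarith)

end Adc

lemma exists_tendsto_adcP_affine {k : ℕ} (hk : 2 ≤ k) (q : ℕ → ℝ) {α : ℝ} (hα : α ≠ 0) :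
    ∃ l ∈ Finset.Icc 1 k, ∀ β, Tendsto (fun T ↦ adcP k q (α * T + β) l) atTop (𝓝 1) := by
  rcases hα.lt_or_gt with hα | hα
  · refine ⟨1, by simp; omega, fun β ↦ ?_⟩
    simp only [adcP_one hk]
    refine tendsto_gaussQ_atBot.comp ?_
    exact (tendsto_atBot_add_const_right _ (β - q 1)
      (tendsto_id.const_mul_atTop_of_neg hα)).congr fun T ↦ by simp; ring
  · refine ⟨k, by simp; omega, fun β ↦ ?_⟩
    simp only [adcP_self hk]
    refine tendsto_gaussQ_atBot.comp ?_
    exact (tendsto_atBot_add_const_left _ (q (k - 1) - β) (tendsto_neg_atTop_atBot.comp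
      (tendsto_id.const_mul_atTop hα))).congr fun T ↦ by simp; ring

lemma eventually_mul_exp_neg_lt {f g : ℝ → ℝ} (hfg : Tendsto (fun T ↦ f T - g T) atTop atTop)
    (C : ℝ) {c : ℝ} (hc : 0 < c) : ∀ᶠ T in atTop, C * exp (-f T) < c * exp (-g T) := by
  have h : Tendsto (fun T ↦ C * exp (-(f T - g T))) atTop (𝓝 0) := by
    simpa using (tendsto_exp_neg_atTop_nhds_zero.comp hfg).const_mul C
  filter_upwards [h.eventually_lt_const hc] with T hT
  calc C * exp (-f T) = C * exp (-(f T - g T)) * exp (-g T) := by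
        rw [mul_assoc, ← exp_add]; ring_nf
    _ < c * exp (-g T) := mul_lt_mul_of_pos_right hT (exp_pos _)

lemma tendsto_mul_sq_sub_sq_atTop {p α β α' β' : ℝ} (h : α' ^ 2 < p * α ^ 2) :
    Tendsto (fun T ↦ p * (α * T + β) ^ 2 - (α' * T + β') ^ 2) atTop atTop := by
  have hA : 0 < p * α ^ 2 - α' ^ 2 := by linarith
  have hT : Tendsto (fun T ↦ T * ((p * α ^ 2 - α' ^ 2) * T + 2 * (p * α * β - α' * β')))
      atTop atTop :=
    tendsto_id.atTop_mul_atTop₀ (tendsto_atTop_add_const_right _ _ (tendsto_id.const_mul_atTop hA))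
  exact (tendsto_atTop_add_const_right _ (p * β ^ 2 - β' ^ 2) hT).congr fun T ↦ by ring

lemma add_mul_exp_neg_le {C x δ : ℝ} (hC : 0 ≤ C) (hx : 0 ≤ x) (hδ : 0 < δ) :
    (C + x) * exp (-x) ≤ (C + δ⁻¹) * exp (-((1 - δ) * x)) := by
  have h1 : exp (-x) ≤ exp (-((1 - δ) * x)) := exp_le_exp.2 (by nlinarith)
  have h2 : x * exp (-x) ≤ δ⁻¹ * exp (-((1 - δ) * x)) := by
    have h := add_one_le_exp (δ * x)
    have hx' : x ≤ δ⁻¹ * exp (δ * x) := by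
      rw [le_inv_mul_iff₀ hδ]; linarith
    rw [show -((1 - δ) * x) = δ * x + -x by ring, exp_add, ← mul_assoc]
    exact mul_le_mul_of_nonneg_right hx' (exp_pos _).le
  nlinarith

section OneDim

variable {k₁ k₂ : ℕ} {c q : ℕ → ℝ}

lemma exists_jsDiv_lt_of_abs_lt_one (hk₁ : 2 ≤ k₁) (hc : StrictThresholds k₁ c) (hk₂ : 2 ≤ k₂)
    (hq : StrictThresholds k₂ q) {r : ℝ} (hr : |r| < 1) :
    ∃ t₁ t₂, jsDiv (Finset.Icc 1 k₂) (adcP k₂ q (r * t₁)) (adcP k₂ q (r * t₂))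
      < jsDiv (Finset.Icc 1 k₁) (adcP k₁ c t₁) (adcP k₁ c t₂) := by
  obtain ⟨M₁, -, hM₁⟩ := exists_abs_le_thresholds k₁ c
  obtain ⟨M₂, hM₂0, hM₂⟩ := exists_abs_le_thresholds k₂ q
  -- `1 - δ > r²`: trading `e^{-δ(T - M₁)²/2}` for the polynomial factor still beats `e^{-r²T²/2}`
  set δ : ℝ := (1 - r ^ 2) / 2 with hδ
  have hr2 : r ^ 2 < 1 := by rw [← sq_abs]; nlinarith [abs_nonneg r]
  have hδ0 : 0 < δ := by linarith
  have hlim : Tendsto (fun T ↦ (1 - δ) * ((T - M₁) ^ 2 / 2) - (|r| * T + M₂ + 1) ^ 2 / 2)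
      atTop atTop :=
    ((tendsto_mul_sq_sub_sq_atTop (p := 1 - δ) (α := 1) (β := -M₁) (α' := |r|) (β' := M₂ + 1)
      (by rw [sq_abs]; linarith)).atTop_div_const two_pos).congr fun T ↦ by ring
  obtain ⟨T, hT, hTM⟩ := ((eventually_mul_exp_neg_lt hlim (k₁ * (2 + δ⁻¹))
    (c := (√(2 * π))⁻¹ / 2) (by positivity)).and (eventually_ge_atTop (max M₁ 0))).exists
  have hT0 : 0 ≤ T := le_of_max_le_right hTM
  refine ⟨T, -T, ?_⟩
  have hlegit : log 2 - jsDiv (Finset.Icc 1 k₁) (adcP k₁ c T) (adcP k₁ c (-T))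
      ≤ k₁ * (2 + δ⁻¹) * exp (-((1 - δ) * ((T - M₁) ^ 2 / 2))) := by
    have h := log_two_sub_jsDiv_le (isPosDistrib_adcP hk₁ hc T) (isPosDistrib_adcP hk₁ hc (-T))
      (exp_le_one_iff.2 (by nlinarith)) fun y hy ↦ (min_adcP_adcP_neg_le hM₁ hk₁ hy).trans
        (gaussQ_le_exp (by linarith [le_of_max_le_left hTM]))
    rw [Nat.card_Icc, Nat.add_sub_cancel, ← exp_neg, log_exp, neg_div, neg_neg, mul_comm (exp _)]
      at h
    calc _ ≤ (k₁ : ℝ) * ((2 + (T - M₁) ^ 2 / 2) * exp (-((T - M₁) ^ 2 / 2))) := h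
      _ ≤ k₁ * ((2 + δ⁻¹) * exp (-((1 - δ) * ((T - M₁) ^ 2 / 2)))) :=
        mul_le_mul_of_nonneg_left (add_mul_exp_neg_le zero_le_two (by positivity) hδ0)
          (Nat.cast_nonneg _)
      _ = _ := by ring
  have heve : (√(2 * π))⁻¹ / 2 * exp (-((|r| * T + M₂ + 1) ^ 2 / 2))
      ≤ log 2 - jsDiv (Finset.Icc 1 k₂) (adcP k₂ q (r * T)) (adcP k₂ q (r * -T)) := by
    obtain ⟨l, hl, hlow, hle⟩ := exists_gaussQ_le_adcP_le_adcP_neg hM₂ hk₂ (r * T)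
    rw [mul_neg]
    have h := half_le_log_two_sub_jsDiv (isPosDistrib_adcP hk₂ hq _) (isPosDistrib_adcP hk₂ hq _)
      hl hle
    have h' := mul_exp_le_gaussQ (s := |r * T| + M₂) (by positivity)
    rw [abs_mul, abs_of_nonneg hT0, neg_div] at h'
    rw [abs_mul, abs_of_nonneg hT0] at hlow
    linarith
  linarith

lemma exists_jsDiv_lt_of_one_lt_abs (hk₁ : 2 ≤ k₁) (hc : StrictThresholds k₁ c) (hk₂ : 2 ≤ k₂)
    (hq : StrictThresholds k₂ q) {r : ℝ} (hr : 1 < |r|) :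
    ∃ t₁ t₂, jsDiv (Finset.Icc 1 k₂) (adcP k₂ q (r * t₁)) (adcP k₂ q (r * t₂))
      < jsDiv (Finset.Icc 1 k₁) (adcP k₁ c t₁) (adcP k₁ c t₂) := by
  obtain ⟨M₂, -, hM₂⟩ := exists_abs_le_thresholds k₂ q
  obtain ⟨l, hl, hcorner⟩ := exists_one_sub_adcP_le hM₂ hk₂ r
  have hκ : 0 < (√(2 * π))⁻¹ / 24 := by positivity
  have hlim₁ : Tendsto (fun T ↦ (|r| * T - M₂) ^ 2 / 2 - (T - c 1 + 1) ^ 2 / 2) atTop atTop :=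
    ((tendsto_mul_sq_sub_sq_atTop (p := 1) (α := |r|) (β := -M₂) (α' := 1) (β' := 1 - c 1)
      (by nlinarith)).atTop_div_const two_pos).congr fun T ↦ by ring
  have hlim₂ : Tendsto (fun T ↦ (T + 2 - c 1) ^ 2 / 2 - (T - c 1 + 1) ^ 2 / 2) atTop atTop :=
    (tendsto_atTop_add_const_right _ (3 / 2 - c 1) tendsto_id).congr fun T ↦ by simp; ring
  obtain ⟨T, hT₁, hT₂, hT⟩ := ((eventually_mul_exp_neg_lt hlim₁ 2 hκ).and
    ((eventually_mul_exp_neg_lt hlim₂ (1 / 4) hκ).and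
      (eventually_ge_atTop (max (c 1) (M₂ / |r|))))).exists
  have hTc : c 1 ≤ T := le_of_max_le_left hT
  have hTM : M₂ ≤ |r| * T := by
    have := le_of_max_le_right hT
    rwa [div_le_iff₀ (by linarith), mul_comm] at this
  refine ⟨T + 2, T, ?_⟩
  have heve : jsDiv (Finset.Icc 1 k₂) (adcP k₂ q (r * (T + 2))) (adcP k₂ q (r * T))
      ≤ 2 * exp (-((|r| * T - M₂) ^ 2 / 2)) := by
    have h := jsDiv_le_of_mem (isPosDistrib_adcP hk₂ hq (r * (T + 2)))
      (isPosDistrib_adcP hk₂ hq (r * T)) hl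
    have h₁ := hcorner (T + 2)
    have h₂ := hcorner T
    have h₃ := gaussQ_antitone (show |r| * T - M₂ ≤ |r| * (T + 2) - M₂ by nlinarith)
    have h₄ := gaussQ_le_exp (show 0 ≤ |r| * T - M₂ by linarith)
    rw [neg_div] at h₄
    linarith
  have hlegit : (√(2 * π))⁻¹ / 12 * exp (-((T - c 1 + 1) ^ 2 / 2))
      - 1 / 4 * exp (-((T + 2 - c 1) ^ 2 / 2))
      ≤ jsDiv (Finset.Icc 1 k₁) (adcP k₁ c (T + 2)) (adcP k₁ c T) := by
    have hmem : 1 ∈ Finset.Icc 1 k₁ := by simp; omega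
    have h := (sub_le_jsTerm (adcP_pos hk₁ hc hmem) (adcP_pos hk₁ hc hmem)).trans
      (jsTerm_le_jsDiv (isPosDistrib_adcP hk₁ hc (T + 2)) (isPosDistrib_adcP hk₁ hc T) hmem)
    rw [adcP_one hk₁, adcP_one hk₁] at h
    have h₁ := mul_exp_le_gaussQ (show 0 ≤ T - c 1 by linarith)
    have h₂ := gaussQ_le_exp (show 0 ≤ T + 2 - c 1 by linarith)
    rw [neg_div] at h₁ h₂
    linarith
  linarith

end OneDim

lemma exists_jsDiv_lt_of_abs_ne_one {k₁ k₂ : ℕ} {c q : ℕ → ℝ} (hk₁ : 2 ≤ k₁)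
    (hc : StrictThresholds k₁ c) (hk₂ : 2 ≤ k₂) (hq : StrictThresholds k₂ q) {r : ℝ}
    (hr : |r| ≠ 1) :
    ∃ t₁ t₂, jsDiv (Finset.Icc 1 k₂) (adcP k₂ q (r * t₁)) (adcP k₂ q (r * t₂))
      < jsDiv (Finset.Icc 1 k₁) (adcP k₁ c t₁) (adcP k₁ c t₂) :=
  hr.lt_or_gt.elim (exists_jsDiv_lt_of_abs_lt_one hk₁ hc hk₂ hq)
    (exists_jsDiv_lt_of_one_lt_abs hk₁ hc hk₂ hq)

section Product

variable {ι ι' : Type*} {A : Finset ι} {B : Finset ι'}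

lemma IsPosDistrib.prod {a : ι → ℝ} {b : ι' → ℝ} (ha : IsPosDistrib A a) (hb : IsPosDistrib B b) :
    IsPosDistrib (A ×ˢ B) (fun p ↦ a p.1 * b p.2) :=
  ⟨fun p hp ↦ mul_pos (ha.1 _ (Finset.mem_product.1 hp).1) (hb.1 _ (Finset.mem_product.1 hp).2),
    by rw [Finset.sum_product]; simp [← Finset.mul_sum, hb.2, ha.2]⟩

lemma jsDiv_prod_mul_right (u v : ι → ℝ) {w : ι' → ℝ} (hw : ∑ j ∈ B, w j = 1) :
    jsDiv (A ×ˢ B) (fun p ↦ u p.1 * w p.2) (fun p ↦ v p.1 * w p.2) = jsDiv A u v := by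
  simp only [jsDiv, Finset.sum_product, jsTerm_mul_right, ← Finset.sum_mul, hw, one_mul]

lemma jsDiv_prod_mul_left {w : ι → ℝ} (hw : ∑ i ∈ A, w i = 1) (u v : ι' → ℝ) :
    jsDiv (A ×ˢ B) (fun p ↦ w p.1 * u p.2) (fun p ↦ w p.1 * v p.2) = jsDiv B u v := by
  simp only [jsDiv, Finset.sum_product, mul_comm (w _), jsTerm_mul_right, ← Finset.mul_sum,
    ← Finset.sum_mul, hw, mul_one]

end Product

section Channel

variable {w : ℂ} {kR kI : ℕ} {qR qI : ℕ → ℝ} {x₁ x₂ : ℂ}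

lemma isPosDistrib_pADCC (hkR : 2 ≤ kR) (hqR : StrictThresholds kR qR) (hkI : 2 ≤ kI)
    (hqI : StrictThresholds kI qI) (w x : ℂ) :
    IsPosDistrib (Finset.Icc 1 kR ×ˢ Finset.Icc 1 kI) (pADCC w kR kI qR qI x) :=
  (isPosDistrib_adcP hkR hqR _).prod (isPosDistrib_adcP hkI hqI _)

lemma miADCC_mul (w c : ℂ) (kR kI : ℕ) (qR qI : ℕ → ℝ) (φ : ℝ) (x₁ x₂ : ℂ) :
    miADCC w kR kI qR qI φ (c * x₁) (c * x₂) = miADCC (w * c) kR kI qR qI φ x₁ x₂ := by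
  simp only [miADCC, pADCC, mul_assoc]

lemma miADCC_half (w : ℂ) (kR kI : ℕ) (qR qI : ℕ → ℝ) (x₁ x₂ : ℂ) :
    miADCC w kR kI qR qI (1 / 2) x₁ x₂
      = jsDiv (Finset.Icc 1 kR ×ˢ Finset.Icc 1 kI) (pADCC w kR kI qR qI x₁)
          (pADCC w kR kI qR qI x₂) := by
  refine Finset.sum_congr rfl fun y _ ↦ ?_
  rw [jsTerm]
  ring_nf

lemma miADCC_half_of_im_eq (hkI : kI ≠ 0) (h : (w * x₁).im = (w * x₂).im) :
    miADCC w kR kI qR qI (1 / 2) x₁ x₂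
      = jsDiv (Finset.Icc 1 kR) (adcP kR qR (w * x₁).re) (adcP kR qR (w * x₂).re) := by
  rw [miADCC_half, show pADCC w kR kI qR qI x₂
    = fun y ↦ adcP kR qR (w * x₂).re y.1 * adcP kI qI (w * x₁).im y.2 by rw [h]; rfl]
  exact jsDiv_prod_mul_right _ _ (sum_adcP hkI)

lemma miADCC_half_of_re_eq (hkR : kR ≠ 0) (h : (w * x₁).re = (w * x₂).re) :
    miADCC w kR kI qR qI (1 / 2) x₁ x₂
      = jsDiv (Finset.Icc 1 kI) (adcP kI qI (w * x₁).im) (adcP kI qI (w * x₂).im) := by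
  rw [miADCC_half, show pADCC w kR kI qR qI x₂
    = fun y ↦ adcP kR qR (w * x₁).re y.1 * adcP kI qI (w * x₂).im y.2 by rw [h]; rfl]
  exact jsDiv_prod_mul_left (sum_adcP hkR) _ _

end Channel

section Secrecy

variable {ρ : ℂ} {k₁R k₁I k₂R k₂I : ℕ} {cR cI qR qI : ℕ → ℝ}

lemma exists_miADCC_lt_of_im_eq_zero (him : ρ.im = 0) (hρ : ‖ρ‖ ≠ 1) (hk₁R : 2 ≤ k₁R)
    (hcR : StrictThresholds k₁R cR) (hk₁I : 2 ≤ k₁I) (hk₂R : 2 ≤ k₂R)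
    (hqR : StrictThresholds k₂R qR) (hk₂I : 2 ≤ k₂I) :
    ∃ x₁ x₂ : ℂ, miADCC ρ k₂R k₂I qR qI (1 / 2) x₁ x₂ < miADCC 1 k₁R k₁I cR cI (1 / 2) x₁ x₂ := by
  obtain ⟨t₁, t₂, h⟩ := exists_jsDiv_lt_of_abs_ne_one hk₁R hcR hk₂R hqR
    (r := ρ.re) (by rwa [Complex.abs_re_eq_norm.2 him])
  refine ⟨t₁, t₂, ?_⟩
  rw [miADCC_half_of_im_eq (by omega) (by simp [him]), miADCC_half_of_im_eq (by omega) (by simp)]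
  simpa [him] using h

lemma exists_miADCC_lt_of_re_eq_zero (hre : ρ.re = 0) (hρ : ‖ρ‖ ≠ 1) (hk₁R : 2 ≤ k₁R)
    (hcR : StrictThresholds k₁R cR) (hk₁I : 2 ≤ k₁I) (hk₂R : 2 ≤ k₂R) (hk₂I : 2 ≤ k₂I)
    (hqI : StrictThresholds k₂I qI) :
    ∃ x₁ x₂ : ℂ, miADCC ρ k₂R k₂I qR qI (1 / 2) x₁ x₂ < miADCC 1 k₁R k₁I cR cI (1 / 2) x₁ x₂ := by
  obtain ⟨t₁, t₂, h⟩ := exists_jsDiv_lt_of_abs_ne_one hk₁R hcR hk₂I hqI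
    (r := ρ.im) (by rwa [Complex.abs_im_eq_norm.2 hre])
  refine ⟨t₁, t₂, ?_⟩
  rw [miADCC_half_of_re_eq (by omega) (by simp [hre]), miADCC_half_of_im_eq (by omega) (by simp)]
  simpa [hre] using h

lemma exists_miADCC_lt_of_re_ne_zero_of_im_ne_zero (hre : ρ.re ≠ 0) (him : ρ.im ≠ 0)
    (hk₁R : 2 ≤ k₁R) (hcR : StrictThresholds k₁R cR) (hk₁I : 2 ≤ k₁I) (hk₂R : 2 ≤ k₂R)
    (hqR : StrictThresholds k₂R qR) (hk₂I : 2 ≤ k₂I) (hqI : StrictThresholds k₂I qI) :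
    ∃ x₁ x₂ : ℂ, miADCC ρ k₂R k₂I qR qI (1 / 2) x₁ x₂ < miADCC 1 k₁R k₁I cR cI (1 / 2) x₁ x₂ := by
  have hmem : 1 ∈ Finset.Icc 1 k₁R := by simp; omega
  have hL : 0 < jsDiv (Finset.Icc 1 k₁R) (adcP k₁R cR 2) (adcP k₁R cR 0) :=
    jsDiv_pos (isPosDistrib_adcP hk₁R hcR 2) (isPosDistrib_adcP hk₁R hcR 0) hmem
      (by rw [adcP_one hk₁R, adcP_one hk₁R]; exact (gaussQ_strictAnti (by linarith)).ne)
  have hlegit : ∀ T : ℝ, miADCC 1 k₁R k₁I cR cI (1 / 2) (2 + Complex.I * T) (0 + Complex.I * T)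
      = jsDiv (Finset.Icc 1 k₁R) (adcP k₁R cR 2) (adcP k₁R cR 0) := fun T ↦ by
    rw [miADCC_half_of_im_eq (by omega) (by simp)]
    simp
  obtain ⟨lR, hlR, hR⟩ := exists_tendsto_adcP_affine hk₂R qR (neg_ne_zero.2 him)
  obtain ⟨lI, hlI, hI⟩ := exists_tendsto_adcP_affine hk₂I qI hre
  -- the second input is written `0 + iT` so that both inputs have the shape `x₀ + iT`
  have hcorner : ∀ x₀ : ℂ, Tendsto (fun T : ℝ ↦ pADCC ρ k₂R k₂I qR qI
      (x₀ + Complex.I * T) (lR, lI)) atTop (𝓝 1) := fun x₀ ↦ by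
    have h := (hR (ρ * x₀).re).mul (hI (ρ * x₀).im)
    rw [mul_one] at h
    refine h.congr fun T ↦ ?_
    simp only [pADCC, mul_add, Complex.add_re, Complex.add_im, Complex.mul_re, Complex.mul_im,
      Complex.I_re, Complex.I_im, Complex.ofReal_re, Complex.ofReal_im]
    ring_nf
  have heve : Tendsto (fun T : ℝ ↦ miADCC ρ k₂R k₂I qR qI (1 / 2) (2 + Complex.I * T)
      (0 + Complex.I * T)) atTop (𝓝 0) := by
    simp only [miADCC_half]
    exact tendsto_jsDiv_zero (fun _ ↦ isPosDistrib_pADCC hk₂R hqR hk₂I hqI _ _)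
      (fun _ ↦ isPosDistrib_pADCC hk₂R hqR hk₂I hqI _ _) (Finset.mem_product.2 ⟨hlR, hlI⟩)
      (hcorner 2) (hcorner 0)
  obtain ⟨T, hT⟩ := (heve.eventually_lt_const hL).exists
  exact ⟨2 + Complex.I * T, 0 + Complex.I * T, by rwa [hlegit]⟩

lemma exists_miADCC_lt (hρ : ‖ρ‖ ≠ 1) (hk₁R : 2 ≤ k₁R) (hcR : StrictThresholds k₁R cR)
    (hk₁I : 2 ≤ k₁I) (hk₂R : 2 ≤ k₂R) (hqR : StrictThresholds k₂R qR) (hk₂I : 2 ≤ k₂I)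
    (hqI : StrictThresholds k₂I qI) :
    ∃ x₁ x₂ : ℂ, miADCC ρ k₂R k₂I qR qI (1 / 2) x₁ x₂ < miADCC 1 k₁R k₁I cR cI (1 / 2) x₁ x₂ := by
  by_cases him : ρ.im = 0
  · exact exists_miADCC_lt_of_im_eq_zero him hρ hk₁R hcR hk₁I hk₂R hqR hk₂I
  by_cases hre : ρ.re = 0
  · exact exists_miADCC_lt_of_re_eq_zero hre hρ hk₁R hcR hk₁I hk₂R hk₂I hqI
  exact exists_miADCC_lt_of_re_ne_zero_of_im_ne_zero hre him hk₁R hcR hk₁I hk₂R hqR hk₂I hqI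

end Secrecy

theorem positive_secrecy_complex_general_general
    (w₁ w₂ : ℂ) (hw₁ : w₁ ≠ 0)
    (hne : ‖w₁‖ ≠ ‖w₂‖)
    (k₁R k₁I : ℕ) (hk₁R : 2 ≤ k₁R) (hk₁I : 2 ≤ k₁I) (cR cI : ℕ → ℝ)
    (hcR : ∀ l : ℕ, 1 ≤ l → l + 1 ≤ k₁R - 1 → cR l < cR (l + 1))
    (k₂R k₂I : ℕ) (hk₂R : 2 ≤ k₂R) (hk₂I : 2 ≤ k₂I) (qR qI : ℕ → ℝ)
    (hqR : ∀ l : ℕ, 1 ≤ l → l + 1 ≤ k₂R - 1 → qR l < qR (l + 1))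
    (hqI : ∀ l : ℕ, 1 ≤ l → l + 1 ≤ k₂I - 1 → qI l < qI (l + 1)) :
    ∃ (φ : ℝ) (x₁ x₂ : ℂ), φ ∈ Set.Ioo (0 : ℝ) 1 ∧
      0 < miADCC w₁ k₁R k₁I cR cI φ x₁ x₂ - miADCC w₂ k₂R k₂I qR qI φ x₁ x₂ := by
  have hρ : ‖w₂ / w₁‖ ≠ 1 := by
    rwa [norm_div, ne_eq, div_eq_one_iff_eq (norm_ne_zero_iff.2 hw₁), eq_comm]
  obtain ⟨x₁, x₂, h⟩ := exists_miADCC_lt hρ hk₁R hcR hk₁I hk₂R hqR hk₂I hqI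
  refine ⟨1 / 2, w₁⁻¹ * x₁, w₁⁻¹ * x₂, ⟨by norm_num, by norm_num⟩, ?_⟩
  rw [miADCC_mul, miADCC_mul, mul_inv_cancel₀ hw₁, ← div_eq_mul_inv]
  exact sub_pos.2 h

/-- Corollary 1: a positive secrecy rate is achievable for the complex Gaussian wiretap
channel with arbitrary finite-resolution per-component ADCs at both the legitimate
receiver (gain `w₁`, a `(k¹_R,k¹_I)`-point receiver with thresholds `cR`, `cI`) and the
eavesdropper (gain `w₂`, a `(k²_R,k²_I)`-point receiver with thresholds `qR`, `qI`),
whenever `|w₁| ≠ |w₂|`. -/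
theorem positive_secrecy_complex_general
    (w₁ w₂ : ℂ) (hw₁ : w₁ ≠ 0) (hw₂ : w₂ ≠ 0)
    (hne : ‖w₁‖ ≠ ‖w₂‖)
    (k₁R k₁I : ℕ) (hk₁R : 2 ≤ k₁R) (hk₁I : 2 ≤ k₁I) (cR cI : ℕ → ℝ)
    (hcR : ∀ l : ℕ, 1 ≤ l → l + 1 ≤ k₁R - 1 → cR l < cR (l + 1))
    (hcI : ∀ l : ℕ, 1 ≤ l → l + 1 ≤ k₁I - 1 → cI l < cI (l + 1))
    (k₂R k₂I : ℕ) (hk₂R : 2 ≤ k₂R) (hk₂I : 2 ≤ k₂I) (qR qI : ℕ → ℝ)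
    (hqR : ∀ l : ℕ, 1 ≤ l → l + 1 ≤ k₂R - 1 → qR l < qR (l + 1))
    (hqI : ∀ l : ℕ, 1 ≤ l → l + 1 ≤ k₂I - 1 → qI l < qI (l + 1)) :
    ∃ (φ : ℝ) (x₁ x₂ : ℂ), φ ∈ Set.Ioo (0 : ℝ) 1 ∧
      0 < miADCC w₁ k₁R k₁I cR cI φ x₁ x₂ - miADCC w₂ k₂R k₂I qR qI φ x₁ x₂ :=
  positive_secrecy_complex_general_general w₁ w₂ hw₁ hne k₁R k₁I hk₁R hk₁I cR cI hcR k₂R k₂I hk₂R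
    hk₂I qR qI hqR hqI
end

section
/- For every φ ∈ (0,1), the function f_φ(p) := h(φ(1−p)) − φ·h(p) is strictly decreasing on p ∈ (0,1); in particular, for all 0 < p₁ < p₂ < 1 one has f_φ(p₁) > f_φ(p₂). (Lemma 1: the mutual information of a Z-channel with Bernoulli(φ) input is decreasing in the crossover probability.) -/
open MeasureTheory Real Filter

/-- `f_φ(p) = h(φ(1-p)) - φ·h(p)`, the mutual information of a Z-channel with
crossover probability `p` and `Bernoulli(φ)` input. -/
noncomputable def fphi (φ p : ℝ) : ℝ := binEnt (φ * (1 - p)) - φ * binEnt p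

/-!
The derivative of `f_φ` simplifies to `φ · (log (φ p) - log (1 - φ + φ p))`, using
`φ (1 - p) / (1 - p) = φ`; it is negative on `(0, 1)` because `φ p < 1 - φ + φ p` when `φ < 1`.
-/

theorem binEnt_eq_binEntropy : binEnt = binEntropy := by
  ext p
  simp [binEnt, eta, binEntropy_eq_negMulLog_add_negMulLog_one_sub, negMulLog]

theorem continuous_fphi (φ : ℝ) : Continuous (fphi φ) := by
  unfold fphi
  rw [binEnt_eq_binEntropy]
  fun_prop

theorem hasDerivAt_fphi {φ p : ℝ} (hφ : φ ≠ 0) (hp₀ : p ≠ 0) (hp₁ : p ≠ 1)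
    (hq : φ * (1 - p) ≠ 1) :
    HasDerivAt (fphi φ) (φ * (log (φ * p) - log (1 - φ * (1 - p)))) p := by
  have hp₁' : 1 - p ≠ 0 := sub_ne_zero.2 (Ne.symm hp₁)
  have hinner : HasDerivAt (fun x : ℝ => φ * (1 - x)) (-φ) p := by
    simpa using ((hasDerivAt_id p).const_sub 1).const_mul φ
  have hsum := ((hasDerivAt_binEntropy (mul_ne_zero hφ hp₁') hq).comp p hinner).sub
    ((hasDerivAt_binEntropy hp₀ hp₁).const_mul φ)
  unfold fphi
  rw [binEnt_eq_binEntropy]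
  refine hsum.congr_deriv ?_
  rw [log_mul hφ hp₀, log_mul hφ hp₁']
  ring

/-- Lemma 1: for every `φ ∈ (0,1)`, the function `f_φ` is strictly decreasing on
`(0,1)`; in particular `f_φ(p₁) > f_φ(p₂)` whenever `0 < p₁ < p₂ < 1`. -/
theorem fphi_strictAntiOn (φ : ℝ) (hφ : φ ∈ Set.Ioo (0 : ℝ) 1) :
    StrictAntiOn (fphi φ) (Set.Ioo (0 : ℝ) 1) ∧
      ∀ p₁ p₂ : ℝ, 0 < p₁ → p₁ < p₂ → p₂ < 1 → fphi φ p₂ < fphi φ p₁ := by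
  obtain ⟨hφ₀, hφ₁⟩ := hφ
  have hanti : StrictAntiOn (fphi φ) (Set.Ioo 0 1) := by
    refine strictAntiOn_of_deriv_neg (convex_Ioo 0 1) (continuous_fphi φ).continuousOn
      fun p hp => ?_
    obtain ⟨hp₀, hp₁⟩ : p ∈ Set.Ioo 0 1 := by rwa [interior_Ioo] at hp
    rw [(hasDerivAt_fphi hφ₀.ne' hp₀.ne' hp₁.ne (by nlinarith)).deriv]
    exact mul_neg_of_pos_of_neg hφ₀ (sub_neg.2 (log_lt_log (by positivity) (by linarith)))
  exact ⟨hanti, fun p₁ p₂ h₁ h₁₂ h₂ => hanti ⟨h₁, h₁₂.trans h₂⟩ ⟨h₁.trans h₁₂, h₂⟩ h₁₂⟩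
end

section
/- For every fixed d ∈ (0, 1/2), the map c ↦ h(c−d) − h(c+d) is strictly increasing on c ∈ (d, 1/2); and for every fixed c ∈ (0, 1/2), the map d ↦ h(c−d) − h(c+d) is strictly decreasing on d ∈ (0, c). (Lemma 3.) -/
open MeasureTheory Real Filter

/-! Strict concavity of `h` makes its increments over intervals of a fixed length `2d` strictly
decreasing as the interval moves right; this is the monotonicity in `c`. The monotonicity in `d`
reduces to it through the symmetry `h(p) = h(1 - p)`: writing `m = 1/2 - d` and `δ = 1/2 - c`,
one has `h(c - d) - h(c + d) = h(m - δ) - h(m + δ)`. -/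

section StrictConcave

variable {𝕜 : Type*} [Field 𝕜] [LinearOrder 𝕜] [IsStrictOrderedRing 𝕜] {s : Set 𝕜} {f : 𝕜 → 𝕜}

theorem StrictConcaveOn.strictAntiOn_add_sub (hf : StrictConcaveOn 𝕜 s f) {t : 𝕜} (ht : 0 < t) :
    StrictAntiOn (fun x => f (x + t) - f x) {x | x ∈ s ∧ x + t ∈ s} := by
  intro a ha b hb hab
  have hb' : b ∈ s := hf.1.ordConnected.out ha.1 hb.2 ⟨hab.le, by linarith⟩
  have key : (f (b + t) - f b) / t < (f (a + t) - f a) / t :=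
    calc (f (b + t) - f b) / t = (f b - f (b + t)) / (b - (b + t)) := by
          rw [show b - (b + t) = -t by ring, div_neg, ← neg_div, neg_sub]
      _ < (f a - f (b + t)) / (a - (b + t)) :=
          hf.secant_strict_mono hb.2 ha.1 hb' (by linarith) (by linarith) hab
      _ = (f (b + t) - f a) / (b + t - a) := by
          rw [← neg_sub (f (b + t)), ← neg_sub (b + t), neg_div_neg_eq]
      _ < (f (a + t) - f a) / (a + t - a) :=
          hf.secant_strict_mono ha.1 ha.2 hb.2 (by linarith) (by linarith) (by linarith)
      _ = (f (a + t) - f a) / t := by rw [add_sub_cancel_left]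
  exact (div_lt_div_iff_of_pos_right ht).mp key

theorem StrictConcaveOn.strictMonoOn_sub_sub_add (hf : StrictConcaveOn 𝕜 s f) {d : 𝕜}
    (hd : 0 < d) : StrictMonoOn (fun c => f (c - d) - f (c + d)) {c | c - d ∈ s ∧ c + d ∈ s} := by
  have hshift (c : 𝕜) : c - d + 2 * d = c + d := by ring
  intro c hc c' hc' hcc'
  have := hf.strictAntiOn_add_sub (by positivity : (0 : 𝕜) < 2 * d)
    ⟨hc.1, by rw [hshift]; exact hc.2⟩ ⟨hc'.1, by rw [hshift]; exact hc'.2⟩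
    (sub_lt_sub_right hcc' d)
  simp only [hshift] at this
  linarith

end StrictConcave

theorem strictMonoOn_binEnt_sub_sub_add {d : ℝ} (hd : d ∈ Set.Ioo (0 : ℝ) (1 / 2)) :
    StrictMonoOn (fun c : ℝ => binEnt (c - d) - binEnt (c + d)) (Set.Ioo d (1 / 2)) := by
  obtain ⟨hd0, hd1⟩ := hd
  rw [binEnt_eq_binEntropy]
  refine (strictConcave_binEntropy.strictMonoOn_sub_sub_add hd0).mono fun c ⟨hdc, hc1⟩ => ?_
  exact ⟨⟨by linarith, by linarith⟩, ⟨by linarith, by linarith⟩⟩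

/-- Lemma 3: for fixed `d ∈ (0, 1/2)`, the map `c ↦ h(c-d) - h(c+d)` is strictly
increasing on `(d, 1/2)`; and for fixed `c ∈ (0, 1/2)`, the map
`d ↦ h(c-d) - h(c+d)` is strictly decreasing on `(0, c)`. -/
theorem binEnt_diff_monotone :
    (∀ d : ℝ, d ∈ Set.Ioo (0 : ℝ) (1 / 2) →
      StrictMonoOn (fun c : ℝ => binEnt (c - d) - binEnt (c + d))
        (Set.Ioo d (1 / 2))) ∧
    (∀ c : ℝ, c ∈ Set.Ioo (0 : ℝ) (1 / 2) →
      StrictAntiOn (fun d : ℝ => binEnt (c - d) - binEnt (c + d))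
        (Set.Ioo 0 c)) := by
  refine ⟨fun d hd => strictMonoOn_binEnt_sub_sub_add hd, fun c ⟨hc0, hc1⟩ => ?_⟩
  have hδ : 1 / 2 - c ∈ Set.Ioo (0 : ℝ) (1 / 2) := ⟨by linarith, by linarith⟩
  have hreflect : StrictAntiOn (fun d : ℝ => 1 / 2 - d) (Set.Ioo 0 c) :=
    fun _ _ _ _ h => sub_lt_sub_left h _
  have hmaps : Set.MapsTo (fun d : ℝ => 1 / 2 - d) (Set.Ioo 0 c) (Set.Ioo (1 / 2 - c) (1 / 2)) :=
    fun d ⟨hd0, hdc⟩ => ⟨by linarith, by linarith⟩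
  convert (strictMonoOn_binEnt_sub_sub_add hδ).comp_strictAntiOn hreflect hmaps using 1
  funext d
  rw [Function.comp_apply, binEnt_eq_binEntropy, ← binEntropy_one_sub (c + d)]
  ring_nf
end
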